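/- Let k > 0 with k² < 3, let c₀, w₀ ∈ ℝ with c₀ > w₀², and let ξ ∈ (0, 1/2]. Define Ω_{n,ξ} = (n+ξ)((n+ξ)² - 1) k³ (c₀ - w₀²) / (1 + k²(n+ξ)²). Then: (i) Ω_{-2,ξ} < Ω_{0,ξ} < 0 < Ω_{-1,ξ} < Ω_{1,ξ}; (ii) Ω_{n,ξ} < Ω_{n+1,ξ} for all integers n ≥ 1, and Ω_{-(n+1),ξ} < Ω_{-n,ξ} for all integers n ≥ 2; (iii) consequently, the map n ↦ Ω_{n,ξ} is injective on ℤ, i.e. no two eigenvalues iΩ_{m,ξ}, iΩ_{n,ξ} with m ≠ n collide. -/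

import Mathlib

/-!
Up to the positive factor `k³ (c₀ - w₀²)`, `Ω_{n,ξ}` is `d (n + ξ)` with
`d x = x (x² - 1) / (1 + k² x²)`, and
`d b - d a = (b - a) (a² + ab + b² - 1 + k² ab (ab + 1)) / ((1 + k² a²) (1 + k² b²))`.
When `ab ≥ 1` the middle factor is positive, so `n ↦ Ω_{n,ξ}` increases on `n ≥ 1` and on
`n ≤ -2`; for the pairs `(ξ - 2, ξ)` and `(ξ - 1, ξ + 1)` it equals `η² (3 - k² + k² η²)` with
`η = ξ - 1`, resp. `η = ξ`, which is positive because `k² < 3`. Together with the signs of `d` on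
`(0, 1)` and `(-1, 0)` this makes `Ω` strictly increasing along `… , -3, -2, 0, -1, 1, 2, …`.
-/

noncomputable def dispersion (k x : ℝ) : ℝ :=
  x * (x ^ 2 - 1) / (1 + k ^ 2 * x ^ 2)

theorem dispersion_sub_dispersion (k a b : ℝ) :
    dispersion k b - dispersion k a =
      (b - a) * (a ^ 2 + a * b + b ^ 2 - 1 + k ^ 2 * (a * b) * (a * b + 1)) /
        ((1 + k ^ 2 * a ^ 2) * (1 + k ^ 2 * b ^ 2)) := by
  unfold dispersion
  field_simp
  ring

theorem dispersion_lt_dispersion {k a b : ℝ} (hab : a < b)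
    (hQ : 0 < a ^ 2 + a * b + b ^ 2 - 1 + k ^ 2 * (a * b) * (a * b + 1)) :
    dispersion k a < dispersion k b := by
  rw [← sub_pos, dispersion_sub_dispersion]
  have : 0 < b - a := sub_pos.mpr hab
  positivity

theorem dispersion_lt_dispersion_of_one_le_mul {a b : ℝ} (k : ℝ) (hab : a < b)
    (h : 1 ≤ a * b) : dispersion k a < dispersion k b := by
  refine dispersion_lt_dispersion hab ?_
  have : 0 ≤ k ^ 2 * (a * b) * (a * b + 1) := by positivity
  nlinarith [sq_nonneg (a - b)]

theorem dispersion_sub_one_lt_add_one {k η : ℝ} (hk : k ^ 2 ≤ 3) (hη : η ≠ 0) :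
    dispersion k (η - 1) < dispersion k (η + 1) := by
  refine dispersion_lt_dispersion (by linarith) ?_
  have hη2 : 0 < η ^ 2 := by positivity
  have : 0 < 3 - k ^ 2 + k ^ 2 * η ^ 2 := by
    rcases hk.lt_or_eq with hk | hk
    · nlinarith [mul_nonneg (sq_nonneg k) hη2.le]
    · rw [hk]; positivity
  nlinarith [mul_pos hη2 this]

theorem dispersion_neg {k x : ℝ} (hx₀ : 0 < x) (hx₁ : x < 1) : dispersion k x < 0 :=
  div_neg_of_neg_of_pos (mul_neg_of_pos_of_neg hx₀ (by nlinarith)) (by positivity)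

theorem dispersion_pos {k x : ℝ} (hx₀ : -1 < x) (hx₁ : x < 0) : 0 < dispersion k x :=
  div_pos (mul_pos_of_neg_of_neg hx₁ (by nlinarith)) (by positivity)

theorem strictMono_comp_swap_zero_neg_one {α : Type*} [Preorder α] {f : ℤ → α}
    (hdown : ∀ n : ℤ, 2 ≤ n → f (-(n + 1)) < f (-n)) (h₁ : f (-2) < f 0)
    (h₂ : f 0 < f (-1)) (h₃ : f (-1) < f 1) (hup : ∀ n : ℤ, 1 ≤ n → f n < f (n + 1)) :
    StrictMono (f ∘ Equiv.swap 0 (-1)) := by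
  refine strictMono_int_of_lt_succ fun n => ?_
  rcases (by omega : n ≤ -3 ∨ n = -2 ∨ n = -1 ∨ n = 0 ∨ 1 ≤ n) with hn | rfl | rfl | rfl | hn
  · simpa [Equiv.swap_apply_of_ne_of_ne, show n ≠ 0 ∧ n ≠ -1 ∧ n + 1 ≠ 0 ∧ n + 1 ≠ -1 by omega]
      using hdown (-(n + 1)) (by omega)
  · simpa [Equiv.swap_apply_of_ne_of_ne] using h₁
  · simpa using h₂
  · simpa [Equiv.swap_apply_of_ne_of_ne] using h₃
  · simpa [Equiv.swap_apply_of_ne_of_ne, show n ≠ 0 ∧ n ≠ -1 ∧ n + 1 ≠ 0 ∧ n + 1 ≠ -1 by omega]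
      using hup n hn

/-- For `k > 0` with `k² < 3`, `c₀ > w₀²`, `ξ ∈ (0, 1/2]` and
`Ω n = (n+ξ)((n+ξ)² - 1) k³ (c₀ - w₀²)/(1 + k²(n+ξ)²)`:
(i) `Ω(-2) < Ω(0) < 0 < Ω(-1) < Ω(1)`;
(ii) `Ω n < Ω (n+1)` for `n ≥ 1` and `Ω (-(n+1)) < Ω (-n)` for `n ≥ 2`;
(iii) `n ↦ Ω n` is injective on `ℤ`, i.e. no two eigenvalues `iΩ_m, iΩ_n`, `m ≠ n`,
collide. -/
theorem stmt16 (k c₀ w₀ ξ : ℝ) (hk : 0 < k) (hk3 : k ^ 2 < 3) (hcw : w₀ ^ 2 < c₀)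
    (hξ : ξ ∈ Set.Ioc (0:ℝ) (1 / 2))
    (Ω : ℤ → ℝ)
    (hΩ : ∀ n : ℤ, Ω n = ((n : ℝ) + ξ) * (((n : ℝ) + ξ) ^ 2 - 1) * k ^ 3 * (c₀ - w₀ ^ 2) /
        (1 + k ^ 2 * ((n : ℝ) + ξ) ^ 2)) :
    (Ω (-2) < Ω 0 ∧ Ω 0 < 0 ∧ 0 < Ω (-1) ∧ Ω (-1) < Ω 1) ∧
    (∀ n : ℤ, 1 ≤ n → Ω n < Ω (n + 1)) ∧
    (∀ n : ℤ, 2 ≤ n → Ω (-(n + 1)) < Ω (-n)) ∧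
    Function.Injective Ω := by
  obtain ⟨hξ₀, hξ₁⟩ := hξ
  have hC : 0 < k ^ 3 * (c₀ - w₀ ^ 2) := mul_pos (pow_pos hk 3) (sub_pos.mpr hcw)
  have hΩd : ∀ n : ℤ, Ω n = k ^ 3 * (c₀ - w₀ ^ 2) * dispersion k (n + ξ) := fun n => by
    rw [hΩ, dispersion]; ring
  have hlt : ∀ m n : ℤ, Ω m < Ω n ↔ dispersion k (m + ξ) < dispersion k (n + ξ) := fun m n => by
    rw [hΩd, hΩd, mul_lt_mul_iff_right₀ hC]
  have h₁ : Ω (-2) < Ω 0 := (hlt _ _).mpr <| by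
    convert dispersion_sub_one_lt_add_one hk3.le (η := ξ - 1) (by linarith) using 2 <;>
      push_cast <;> ring
  have h₂ : Ω 0 < 0 := by
    rw [hΩd]; exact mul_neg_of_pos_of_neg hC (dispersion_neg (by simpa) (by simp; linarith))
  have h₃ : 0 < Ω (-1) := by
    rw [hΩd]; exact mul_pos hC (dispersion_pos (by simp; linarith) (by simp; linarith))
  have h₄ : Ω (-1) < Ω 1 := (hlt _ _).mpr <| by
    convert dispersion_sub_one_lt_add_one hk3.le (η := ξ) hξ₀.ne' using 2 <;> push_cast <;> ring
  have hup : ∀ n : ℤ, 1 ≤ n → Ω n < Ω (n + 1) := fun n hn => (hlt _ _).mpr <| by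
    have : (1 : ℝ) ≤ n := by exact_mod_cast hn
    exact dispersion_lt_dispersion_of_one_le_mul k (by push_cast; linarith) (by push_cast; nlinarith)
  have hdown : ∀ n : ℤ, 2 ≤ n → Ω (-(n + 1)) < Ω (-n) := fun n hn => (hlt _ _).mpr <| by
    have : (2 : ℝ) ≤ n := by exact_mod_cast hn
    exact dispersion_lt_dispersion_of_one_le_mul k (by push_cast; linarith) (by push_cast; nlinarith)
  refine ⟨⟨h₁, h₂, h₃, h₄⟩, hup, hdown, ?_⟩
  exact (Function.Injective.of_comp_iff' Ω (Equiv.swap 0 (-1)).bijective).mp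
    (strictMono_comp_swap_zero_neg_one hdown h₁ (h₂.trans h₃) h₄ hup).injective
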